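/- Let X be an approximate subring of a ring, and define the sequence (X_n) by X_0 := X and X_{n+1} := X_n·X_n + (X_n + X_n). Then for every n, the set X_n is covered by finitely many additive translates of X (i.e. there is a finite set F_n with X_n ⊆ F_n + X). -/

import Mathlib

open Pointwise

/-- A subset of a (not necessarily unital or commutative) ring is additively symmetric
if it contains `0` and `-X = X`. -/
def AddSymmetric {R : Type*} [NonUnitalRing R] (X : Set R) : Prop :=
  (0 : R) ∈ X ∧ -X = X

/-- `X` is an approximate subring if it is additively symmetric and
`X·X ∪ (X+X) ⊆ F + X` for some finite subset `F` of the subring generated by `X`. -/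
def IsApproxSubring {R : Type*} [NonUnitalRing R] (X : Set R) : Prop :=
  AddSymmetric X ∧ ∃ F : Set R, F.Finite ∧ F ⊆ (NonUnitalSubring.closure X : Set R) ∧
    X * X ∪ (X + X) ⊆ F + X

/-- The sequence `X_0 := X`, `X_{n+1} := X_n·X_n + (X_n + X_n)`. -/
def XSeq {R : Type*} [NonUnitalRing R] (X : Set R) : ℕ → Set R
  | 0 => X
  | n + 1 => XSeq X n * XSeq X n + (XSeq X n + XSeq X n)

/-! Call `A` *covered* (`CoveredByTranslates X A`) if `A ⊆ G + X` for a finite `G` inside the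
subring `⟨X⟩`. Covered sets are closed under sums, since `(G + X) + (H + X) ⊆ (G + H + F) + X`.
For products, `(G + X) * (H + X)` splits into `G * H`, `X * H`, `G * X` and `X * X`, so it suffices
that `{a} * X` and `X * {a}` are covered for every `a ∈ ⟨X⟩`. This follows by induction over `⟨X⟩`:
`-X = X` handles negation, and `{x * y} * X ⊆ {x} * H + {x} * X` handles products, which is where
the translates must lie in `⟨X⟩`. Induction on `n` then covers every `X_n`. -/

section CoveredByTranslates

variable {R : Type*} [NonUnitalRing R] {X A B : Set R}

def CoveredByTranslates (X A : Set R) : Prop :=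
  ∃ G : Set R, G.Finite ∧ G ⊆ (NonUnitalSubring.closure X : Set R) ∧ A ⊆ G + X

theorem CoveredByTranslates.mono (hB : CoveredByTranslates X B) (h : A ⊆ B) :
    CoveredByTranslates X A :=
  let ⟨G, hG, hGX, hBG⟩ := hB
  ⟨G, hG, hGX, h.trans hBG⟩

theorem CoveredByTranslates.biUnion {ι : Type*} {S : Set ι} (hS : S.Finite) {A : ι → Set R}
    (hA : ∀ i ∈ S, CoveredByTranslates X (A i)) : CoveredByTranslates X (⋃ i ∈ S, A i) := by
  choose! G hG hGX hAG using hA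
  refine ⟨⋃ i ∈ S, G i, hS.biUnion hG, Set.iUnion₂_subset hGX, Set.iUnion₂_subset fun i hi => ?_⟩
  exact (hAG i hi).trans (Set.add_subset_add_right (Set.subset_biUnion_of_mem hi))

theorem coveredByTranslates_of_finite (h0 : (0 : R) ∈ X) (hA : A.Finite)
    (hAX : A ⊆ NonUnitalSubring.closure X) : CoveredByTranslates X A :=
  ⟨A, hA, hAX, Set.subset_add_left A h0⟩

theorem coveredByTranslates_self : CoveredByTranslates X X :=
  ⟨{0}, Set.finite_singleton 0, by simp [zero_mem], by simp⟩

theorem CoveredByTranslates.add (hXX : CoveredByTranslates X (X + X))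
    (hA : CoveredByTranslates X A) (hB : CoveredByTranslates X B) :
    CoveredByTranslates X (A + B) := by
  obtain ⟨G, hG, hGX, hAG⟩ := hA
  obtain ⟨H, hH, hHX, hBH⟩ := hB
  obtain ⟨K, hK, hKX, hXXK⟩ := hXX
  refine ⟨G + H + K, (hG.add hH).add hK, ?_, ?_⟩
  · rintro _ ⟨_, ⟨g, hg, h, hh, rfl⟩, k, hk, rfl⟩
    exact add_mem (add_mem (hGX hg) (hHX hh)) (hKX hk)
  · calc A + B ⊆ (G + X) + (H + X) := Set.add_subset_add hAG hBH
      _ = (G + H) + (X + X) := add_add_add_comm G X H X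
      _ ⊆ (G + H) + (K + X) := Set.add_subset_add_left hXXK
      _ = G + H + K + X := (add_assoc _ _ _).symm

end CoveredByTranslates

namespace IsApproxSubring

variable {R : Type*} [NonUnitalRing R] {X A B : Set R} (hX : IsApproxSubring X)
include hX

theorem zero_mem : (0 : R) ∈ X := hX.1.1

theorem neg_eq : -X = X := hX.1.2

theorem coveredByTranslates_mul_self : CoveredByTranslates X (X * X) :=
  let ⟨F, hF, hFX, hXF⟩ := hX.2
  ⟨F, hF, hFX, Set.subset_union_left.trans hXF⟩

theorem coveredByTranslates_add_self : CoveredByTranslates X (X + X) :=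
  let ⟨F, hF, hFX, hXF⟩ := hX.2
  ⟨F, hF, hFX, Set.subset_union_right.trans hXF⟩

theorem coveredByTranslates_add (hA : CoveredByTranslates X A) (hB : CoveredByTranslates X B) :
    CoveredByTranslates X (A + B) :=
  hX.coveredByTranslates_add_self.add hA hB

theorem coveredByTranslates_singleton_mul {a : R} (ha : a ∈ NonUnitalSubring.closure X) :
    CoveredByTranslates X ({a} * X) := by
  induction ha using NonUnitalSubring.closure_induction with
  | mem x hx =>
    exact hX.coveredByTranslates_mul_self.mono (Set.mul_subset_mul_right (by simpa using hx))
  | zero =>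
    exact (coveredByTranslates_of_finite hX.zero_mem (Set.finite_singleton 0)
      (by simp)).mono (Set.zero_mul_subset X)
  | add x y _ _ hx hy =>
    refine (hX.coveredByTranslates_add hx hy).mono ?_
    rw [← Set.singleton_add_singleton]
    exact Set.add_mul_subset _ _ _
  | neg x _ hx =>
    rwa [← Set.neg_singleton, neg_mul, ← mul_neg, hX.neg_eq]
  | mul x y hxX _ hx hy =>
    obtain ⟨H, hH, hHX, hyH⟩ := hy
    have hxH : CoveredByTranslates X ({x} * H) :=
      coveredByTranslates_of_finite hX.zero_mem ((Set.finite_singleton x).mul hH) <| by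
        rintro _ ⟨_, rfl, h, hh, rfl⟩
        exact mul_mem hxX (hHX hh)
    refine (hX.coveredByTranslates_add hxH hx).mono ?_
    calc {x * y} * X = {x} * ({y} * X) := by rw [← mul_assoc, Set.singleton_mul_singleton]
      _ ⊆ {x} * (H + X) := Set.mul_subset_mul_left hyH
      _ ⊆ {x} * H + {x} * X := Set.mul_add_subset _ _ _

theorem coveredByTranslates_mul_singleton {a : R} (ha : a ∈ NonUnitalSubring.closure X) :
    CoveredByTranslates X (X * {a}) := by
  induction ha using NonUnitalSubring.closure_induction with
  | mem x hx =>
    exact hX.coveredByTranslates_mul_self.mono (Set.mul_subset_mul_left (by simpa using hx))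
  | zero =>
    exact (coveredByTranslates_of_finite hX.zero_mem (Set.finite_singleton 0)
      (by simp)).mono (Set.mul_zero_subset X)
  | add x y _ _ hx hy =>
    refine (hX.coveredByTranslates_add hx hy).mono ?_
    rw [← Set.singleton_add_singleton]
    exact Set.mul_add_subset _ _ _
  | neg x _ hx =>
    rwa [← Set.neg_singleton, mul_neg, ← neg_mul, hX.neg_eq]
  | mul x y _ hyX hx hy =>
    obtain ⟨H, hH, hHX, hxH⟩ := hx
    have hHy : CoveredByTranslates X (H * {y}) :=
      coveredByTranslates_of_finite hX.zero_mem (hH.mul (Set.finite_singleton y)) <| by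
        rintro _ ⟨h, hh, _, rfl, rfl⟩
        exact mul_mem (hHX hh) hyX
    refine (hX.coveredByTranslates_add hHy hy).mono ?_
    calc X * {x * y} = (X * {x}) * {y} := by rw [mul_assoc, Set.singleton_mul_singleton]
      _ ⊆ (H + X) * {y} := Set.mul_subset_mul_right hxH
      _ ⊆ H * {y} + X * {y} := Set.add_mul_subset _ _ _

theorem coveredByTranslates_mul (hA : CoveredByTranslates X A) (hB : CoveredByTranslates X B) :
    CoveredByTranslates X (A * B) := by
  obtain ⟨G, hG, hGX, hAG⟩ := hA
  obtain ⟨H, hH, hHX, hBH⟩ := hB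
  have hGH : CoveredByTranslates X (G * H) :=
    coveredByTranslates_of_finite hX.zero_mem (hG.mul hH) <| by
      rintro _ ⟨g, hg, h, hh, rfl⟩
      exact mul_mem (hGX hg) (hHX hh)
  have hXH : CoveredByTranslates X (X * H) := by
    rw [← Set.iUnion_mul_right_image]
    exact .biUnion hH fun h hh => by
      simpa only [Set.mul_singleton] using hX.coveredByTranslates_mul_singleton (hHX hh)
  have hGX' : CoveredByTranslates X (G * X) := by
    rw [← Set.iUnion_mul_left_image]
    exact .biUnion hG fun g hg => by
      simpa only [Set.singleton_mul] using hX.coveredByTranslates_singleton_mul (hGX hg)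
  refine (hX.coveredByTranslates_add (hX.coveredByTranslates_add hGH hXH)
    (hX.coveredByTranslates_add hGX' hX.coveredByTranslates_mul_self)).mono ?_
  calc A * B ⊆ (G + X) * (H + X) := Set.mul_subset_mul hAG hBH
    _ ⊆ (G + X) * H + (G + X) * X := Set.mul_add_subset _ _ _
    _ ⊆ (G * H + X * H) + (G * X + X * X) :=
      Set.add_subset_add (Set.add_mul_subset _ _ _) (Set.add_mul_subset _ _ _)

theorem coveredByTranslates_XSeq (n : ℕ) : CoveredByTranslates X (XSeq X n) := by
  induction n with
  | zero => exact coveredByTranslates_self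
  | succ n ih =>
    exact hX.coveredByTranslates_add (hX.coveredByTranslates_mul ih ih)
      (hX.coveredByTranslates_add ih ih)

end IsApproxSubring

/-- For an approximate subring `X`, every `X_n` is covered by finitely many
additive translates of `X`. -/
theorem approx_subring_XSeq_covered
    {R : Type*} [NonUnitalRing R] (X : Set R) (hX : IsApproxSubring X) (n : ℕ) :
    ∃ F : Set R, F.Finite ∧ XSeq X n ⊆ F + X :=
  let ⟨F, hF, _, hXF⟩ := hX.coveredByTranslates_XSeq n
  ⟨F, hF, hXF⟩
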